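/- In the simplified model, the bias correction matches the second moment of the pre-averaged noise up to O(1/n): there are constants C > 0 and N such that for all n ≥ N and all 2 ≤ i ≤ m, |E[ε̄_{i,m}²] − E[𝔟(λ,Y)_{i,m}]| ≤ C/n. -/

import Mathlib

open MeasureTheory ProbabilityTheory Real

noncomputable section

/-- `Λ(u) = -∫₀ᵘ λ(v) dv`. -/
def bigLam (lam : ℝ → ℝ) (u : ℝ) : ℝ := -∫ v in (0:ℝ)..u, lam v

/-- A (normalized) pre-average function: piecewise Lipschitz on `[0,2]`,
antisymmetric about `1`, and normalized. -/
structure IsPreAverageFn (lam : ℝ → ℝ) : Prop where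
  piecewise_lipschitz : ∃ (N : ℕ) (t : ℕ → ℝ) (K : NNReal),
      0 < N ∧ t 0 = 0 ∧ t N = 2 ∧ (∀ i < N, t i < t (i + 1)) ∧
      ∀ i < N, LipschitzOnWith K lam (Set.Ioo (t i) (t (i + 1)))
  antisymm : ∀ t ∈ Set.Icc (0:ℝ) 1, lam t = - lam (2 - t)
  normalized : Real.sqrt (2 * ∫ s in (0:ℝ)..1, (∫ u in (0:ℝ)..s, lam u) ^ 2) = 1

/-- `m = n / ⌊√n / c⌋`. -/
def mOf (c : ℝ) (n : ℕ) : ℕ := n / ⌊Real.sqrt n / c⌋₊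

/-- The indices `j` with `j/n ∈ [(i-2)/m , i/m]`. -/
def blockIdx (n m i : ℕ) : Finset ℕ :=
  (Finset.range (n + 1)).filter fun j =>
    ((i : ℝ) - 2) / m ≤ (j : ℝ) / n ∧ (j : ℝ) / n ≤ (i : ℝ) / m

variable {Ω : Type*}

/-- Pre-averaged value `Ā_{i,m} = (m/n) ∑_{j/n ∈ [(i-2)/m, i/m]} λ(m j/n - (i-2)) A_j`. -/
def preAvg (lam : ℝ → ℝ) (n m : ℕ) (A : ℕ → Ω → ℝ) (i : ℕ) (ω : Ω) : ℝ :=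
  ((m : ℝ) / n) * ∑ j ∈ blockIdx n m i,
    lam ((m : ℝ) * j / n - ((i : ℝ) - 2)) * A j ω

/-- Bias correction `𝔟(λ, A)_{i,m}`. -/
def biasCorr (lam : ℝ → ℝ) (n m : ℕ) (A : ℕ → Ω → ℝ) (i : ℕ) (ω : Ω) : ℝ :=
  ((m : ℝ) ^ 2 / (2 * (n : ℝ) ^ 2)) * ∑ j ∈ (blockIdx n m i).filter (fun j => 1 ≤ j),
    (lam ((m : ℝ) * j / n - ((i : ℝ) - 2))) ^ 2 * (A j ω - A (j - 1) ω) ^ 2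

/-- The simplified model: `(W_{j/n})_j` and `(η_{j,n})_j` form a centered jointly Gaussian
family with `Cov(W_{j/n}, W_{l/n}) = min(j,l)/n`, `(η_{j,n})` standard Gaussian i.i.d.
and uncorrelated with the `W` grid values. -/
def IsSimplifiedModel [MeasureSpace Ω] (n : ℕ) (W η : ℕ → Ω → ℝ) : Prop :=
  (∀ j, Measurable (W j)) ∧ (∀ j, Measurable (η j)) ∧
  (∀ a b : ℕ → ℝ, ∃ v : NNReal,
    Measure.map (fun ω => ∑ j ∈ Finset.range (n + 1), (a j * W j ω + b j * η j ω)) ℙ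
      = gaussianReal 0 v) ∧
  (∀ j l, j ≤ n → l ≤ n → ∫ ω, W j ω * W l ω = (min j l : ℝ) / n) ∧
  (∀ j l, j ≤ n → l ≤ n → ∫ ω, η j ω * η l ω = if j = l then 1 else 0) ∧
  (∀ j l, j ≤ n → l ≤ n → ∫ ω, W j ω * η l ω = 0)

/-- The observations `Y_{j,n} = σ W_{j/n} + τ η_{j,n}`. -/
def obs (σ τ : ℝ) (W η : ℕ → Ω → ℝ) (j : ℕ) (ω : Ω) : ℝ := σ * W j ω + τ * η j ω

end


/-! Orthonormality of the noise gives `E[ε̄²] = (m/n)² τ² ∑_{j ∈ B} λ_j²`, where `B` is the block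
of indices and `λ_j = λ(m j/n - (i-2))`, while every squared increment of the observations has
mean `σ²/n + 2τ²`, so `E[𝔟] = (m/n)²/2 · (σ²/n + 2τ²) ∑_{j ∈ B, j ≥ 1} λ_j²`. The `τ²` parts differ
only by the term `j = 0`, and the `σ²` part is at most `(m/n)² σ² (n+1)/(2n) · sup λ²` since `B` has
at most `n + 1` elements. As `λ` is bounded on `[0,2]` (it is piecewise Lipschitz), the difference
is `O((m/n)²)`, which is `O(1/n)` because `m ≤ 2c√n`. -/

open Set Bornology

lemma LipschitzOnWith.isBounded_image {α β : Type*} [PseudoMetricSpace α] [PseudoMetricSpace β]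
    {K : NNReal} {f : α → β} {s : Set α} (hf : LipschitzOnWith K f s) (hs : IsBounded s) :
    IsBounded (f '' s) := by
  obtain ⟨C, hC⟩ := Metric.isBounded_iff.mp hs
  refine Metric.isBounded_iff.mpr ⟨K * C, ?_⟩
  rintro _ ⟨x, hx, rfl⟩ _ ⟨y, hy, rfl⟩
  exact (hf.dist_le_mul x hx y hy).trans (by gcongr; exact hC hx hy)

lemma Icc_subset_image_Iic_union_iUnion_Ioo (t : ℕ → ℝ) (N : ℕ) :
    Icc (t 0) (t N) ⊆ t '' Iic N ∪ ⋃ k < N, Ioo (t k) (t (k + 1)) := by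
  induction N with
  | zero => simp
  | succ N ih =>
    intro x hx
    by_cases hxN : x ≤ t N
    · rcases ih ⟨hx.1, hxN⟩ with ⟨k, hk, rfl⟩ | hIoo
      · exact Or.inl ⟨k, Nat.le_succ_of_le hk, rfl⟩
      · obtain ⟨k, hk, hxk⟩ := mem_iUnion₂.mp hIoo
        exact Or.inr (mem_iUnion₂.mpr ⟨k, Nat.lt_succ_of_lt hk, hxk⟩)
    · rcases hx.2.eq_or_lt with rfl | hlt
      · exact Or.inl ⟨N + 1, mem_Iic.mpr le_rfl, rfl⟩
      · exact Or.inr (mem_iUnion₂.mpr ⟨N, N.lt_succ_self, not_le.mp hxN, hlt⟩)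

lemma IsPreAverageFn.isBounded_image_Icc {lam : ℝ → ℝ} (hlam : IsPreAverageFn lam) :
    IsBounded (lam '' Icc 0 2) := by
  obtain ⟨N, t, K, -, ht0, htN, -, hlip⟩ := hlam.piecewise_lipschitz
  have hcover := image_mono (f := lam) (ht0 ▸ htN ▸ Icc_subset_image_Iic_union_iUnion_Ioo t N)
  rw [image_union, image_iUnion₂] at hcover
  refine .subset (.union ?_ (isBounded_biUnion (finite_Iio N) |>.mpr ?_)) hcover
  · exact ((finite_Iic N).image t).image lam |>.isBounded
  · exact fun k hk => (hlip k hk).isBounded_image (Metric.isBounded_Ioo _ _)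

section SecondMoments

variable {Ω : Type*} [MeasurableSpace Ω] {μ : Measure Ω}

lemma memLp_two_of_map_eq_gaussianReal {f : Ω → ℝ} (hf : AEMeasurable f μ) {m : ℝ}
    {v : NNReal} (h : μ.map f = gaussianReal m v) : MemLp f 2 μ := by
  have hid : MemLp id 2 (gaussianReal m v) := memLp_id_gaussianReal' 2 (by norm_num)
  rw [← h] at hid
  exact (memLp_map_measure_iff aestronglyMeasurable_id hf).mp hid

lemma integral_sub_mul_sub {f g h k : Ω → ℝ} (hf : MemLp f 2 μ) (hg : MemLp g 2 μ)
    (hh : MemLp h 2 μ) (hk : MemLp k 2 μ) :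
    ∫ ω, (f ω - g ω) * (h ω - k ω) ∂μ
      = ∫ ω, f ω * h ω ∂μ - ∫ ω, f ω * k ω ∂μ - ∫ ω, g ω * h ω ∂μ + ∫ ω, g ω * k ω ∂μ := by
  have I {u v : Ω → ℝ} (hu : MemLp u 2 μ) (hv : MemLp v 2 μ) :
      Integrable (fun ω => u ω * v ω) μ := hu.integrable_mul hv
  have hexp : ∀ ω, (f ω - g ω) * (h ω - k ω)
      = f ω * h ω - f ω * k ω - (g ω * h ω - g ω * k ω) := fun ω => by ring
  simp only [hexp]
  rw [integral_sub, integral_sub (I hf hh) (I hf hk), integral_sub (I hg hh) (I hg hk)]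
  · ring
  exacts [(I hf hh).sub (I hf hk), (I hg hh).sub (I hg hk)]

lemma integral_mul_add_mul_sq {f g : Ω → ℝ} (hf : MemLp f 2 μ) (hg : MemLp g 2 μ) (a b : ℝ) :
    ∫ ω, (a * f ω + b * g ω) ^ 2 ∂μ
      = a ^ 2 * ∫ ω, f ω * f ω ∂μ + 2 * a * b * ∫ ω, f ω * g ω ∂μ
        + b ^ 2 * ∫ ω, g ω * g ω ∂μ := by
  have hexp : ∀ ω, (a * f ω + b * g ω) ^ 2
      = a ^ 2 * (f ω * f ω) + 2 * a * b * (f ω * g ω) + b ^ 2 * (g ω * g ω) := fun ω => by ring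
  have I {u v : Ω → ℝ} (hu : MemLp u 2 μ) (hv : MemLp v 2 μ) (c : ℝ) :
      Integrable (fun ω => c * (u ω * v ω)) μ := (hu.integrable_mul hv).const_mul c
  simp only [hexp]
  rw [integral_add, integral_add (I hf hf _) (I hf hg _),
    integral_const_mul, integral_const_mul, integral_const_mul]
  exacts [(I hf hf _).add (I hf hg _), I hg hg _]

lemma integral_sum_mul_sq_of_orthonormal {ι : Type*} [DecidableEq ι] (s : Finset ι)
    (a : ι → ℝ) {f : ι → Ω → ℝ} (hf : ∀ j ∈ s, MemLp (f j) 2 μ)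
    (horth : ∀ j ∈ s, ∀ l ∈ s, ∫ ω, f j ω * f l ω ∂μ = if j = l then 1 else 0) :
    ∫ ω, (∑ j ∈ s, a j * f j ω) ^ 2 ∂μ = ∑ j ∈ s, a j ^ 2 := by
  have hint : ∀ j ∈ s, ∀ l ∈ s, Integrable (fun ω => a j * a l * (f j ω * f l ω)) μ :=
    fun j hj l hl => ((hf j hj).integrable_mul (hf l hl)).const_mul _
  calc ∫ ω, (∑ j ∈ s, a j * f j ω) ^ 2 ∂μ
      = ∫ ω, ∑ j ∈ s, ∑ l ∈ s, a j * a l * (f j ω * f l ω) ∂μ := by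
        congr 1 with ω
        rw [sq, Finset.sum_mul_sum]
        exact Finset.sum_congr rfl fun j _ => Finset.sum_congr rfl fun l _ => by ring
    _ = ∑ j ∈ s, ∑ l ∈ s, a j * a l * ∫ ω, f j ω * f l ω ∂μ := by
        rw [integral_finsetSum _ fun j hj => integrable_finsetSum _ (hint j hj)]
        refine Finset.sum_congr rfl fun j hj => ?_
        rw [integral_finsetSum _ (hint j hj)]
        exact Finset.sum_congr rfl fun l _ => integral_const_mul _ _
    _ = ∑ j ∈ s, a j ^ 2 := by
        refine Finset.sum_congr rfl fun j hj => ?_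
        rw [Finset.sum_congr rfl fun l hl => by rw [horth j hj l hl]]
        simp [hj, sq]

end SecondMoments

namespace IsSimplifiedModel

variable {Ω : Type*} [MeasureSpace Ω] {n : ℕ} {W η : ℕ → Ω → ℝ}

lemma memLp_W (h : IsSimplifiedModel n W η) {j : ℕ} (hj : j ≤ n) : MemLp (W j) 2 ℙ := by
  obtain ⟨v, hv⟩ := h.2.2.1 (fun k => if k = j then 1 else 0) 0
  have hsum : (fun ω => ∑ k ∈ Finset.range (n + 1),
      ((if k = j then 1 else 0) * W k ω + (0 : ℕ → ℝ) k * η k ω)) = W j := by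
    ext ω; simp [Nat.lt_succ_iff.mpr hj]
  rw [hsum] at hv
  exact memLp_two_of_map_eq_gaussianReal (h.1 j).aemeasurable hv

lemma memLp_η (h : IsSimplifiedModel n W η) {j : ℕ} (hj : j ≤ n) : MemLp (η j) 2 ℙ := by
  obtain ⟨v, hv⟩ := h.2.2.1 0 (fun k => if k = j then 1 else 0)
  have hsum : (fun ω => ∑ k ∈ Finset.range (n + 1),
      ((0 : ℕ → ℝ) k * W k ω + (if k = j then 1 else 0) * η k ω)) = η j := by
    ext ω; simp [Nat.lt_succ_iff.mpr hj]
  rw [hsum] at hv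
  exact memLp_two_of_map_eq_gaussianReal (h.2.1 j).aemeasurable hv

lemma memLp_obs (h : IsSimplifiedModel n W η) (σ τ : ℝ) {j : ℕ} (hj : j ≤ n) :
    MemLp (obs σ τ W η j) 2 ℙ :=
  ((h.memLp_W hj).const_mul σ).add ((h.memLp_η hj).const_mul τ)

lemma integral_obs_sub_sq (h : IsSimplifiedModel n W η) (σ τ : ℝ) {j : ℕ} (hj1 : 1 ≤ j)
    (hjn : j ≤ n) :
    ∫ ω, (obs σ τ W η j ω - obs σ τ W η (j - 1) ω) ^ 2 = σ ^ 2 / n + 2 * τ ^ 2 := by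
  have hj1n : j - 1 ≤ n := by omega
  have hW := h.memLp_W hjn
  have hW' := h.memLp_W hj1n
  have hη := h.memLp_η hjn
  have hη' := h.memLp_η hj1n
  obtain ⟨-, -, -, hWW, hηη, hWη⟩ := h
  have hincr : ∫ ω, (W j ω - W (j - 1) ω) * (W j ω - W (j - 1) ω) = 1 / n := by
    have hle : ((j - 1 : ℕ) : ℝ) ≤ j := by exact_mod_cast Nat.sub_le j 1
    rw [integral_sub_mul_sub hW hW' hW hW', hWW _ _ hjn hjn, hWW _ _ hjn hj1n,
      hWW _ _ hj1n hjn, hWW _ _ hj1n hj1n, min_self, min_self, min_eq_right hle,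
      min_eq_left hle, Nat.cast_sub hj1]
    ring
  have hnoise : ∫ ω, (η j ω - η (j - 1) ω) * (η j ω - η (j - 1) ω) = 2 := by
    rw [integral_sub_mul_sub hη hη' hη hη', hηη _ _ hjn hjn, hηη _ _ hjn hj1n,
      hηη _ _ hj1n hjn, hηη _ _ hj1n hj1n, if_pos rfl, if_pos rfl,
      if_neg (by omega), if_neg (by omega)]
    norm_num
  have hcross : ∫ ω, (W j ω - W (j - 1) ω) * (η j ω - η (j - 1) ω) = 0 := by
    rw [integral_sub_mul_sub hW hW' hη hη', hWη _ _ hjn hjn, hWη _ _ hjn hj1n,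
      hWη _ _ hj1n hjn, hWη _ _ hj1n hj1n]
    ring
  have hsplit : ∀ ω, obs σ τ W η j ω - obs σ τ W η (j - 1) ω
      = σ * (W j ω - W (j - 1) ω) + τ * (η j ω - η (j - 1) ω) := fun ω => by
    simp only [obs]; ring
  simp only [hsplit]
  rw [integral_mul_add_mul_sq (f := fun ω => W j ω - W (j - 1) ω)
    (g := fun ω => η j ω - η (j - 1) ω) (hW.sub hW') (hη.sub hη'), hincr, hnoise, hcross]
  ring

end IsSimplifiedModel

lemma le_of_mem_blockIdx {n m i j : ℕ} (hj : j ∈ blockIdx n m i) : j ≤ n :=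
  Nat.lt_succ_iff.mp (Finset.mem_range.mp (Finset.mem_filter.mp hj).1)

lemma mem_Icc_of_mem_blockIdx {n m i j : ℕ} (hn : 0 < n) (hm : 0 < m) (hj : j ∈ blockIdx n m i) :
    (m : ℝ) * j / n - ((i : ℝ) - 2) ∈ Set.Icc 0 2 := by
  obtain ⟨hlo, hhi⟩ := (Finset.mem_filter.mp hj).2
  have hn' : (0 : ℝ) < n := by exact_mod_cast hn
  have hm' : (0 : ℝ) < m := by exact_mod_cast hm
  rw [div_le_div_iff₀ hm' hn'] at hlo
  rw [div_le_div_iff₀ hn' hm'] at hhi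
  constructor
  · rw [sub_nonneg, le_div_iff₀ hn']; linarith
  · rw [sub_le_iff_le_add, div_le_iff₀ hn']; linarith

lemma sum_filter_one_le_blockIdx_le {n m i : ℕ} {g : ℕ → ℝ} {M : ℝ} (hM : 0 ≤ M)
    (hg : ∀ j ∈ blockIdx n m i, g j ≤ M) :
    ∑ j ∈ blockIdx n m i with 1 ≤ j, g j ≤ (n + 1) * M := by
  have hcard : (((blockIdx n m i).filter (1 ≤ ·)).card : ℝ) ≤ n + 1 := by
    exact_mod_cast (Finset.card_filter_le _ _).trans
      ((Finset.card_filter_le _ _).trans (Finset.card_range _).le)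
  refine (Finset.sum_le_card_nsmul _ _ _ fun j hj => hg j (Finset.mem_filter.mp hj).1).trans ?_
  rw [nsmul_eq_mul]
  gcongr

lemma sum_eq_sum_filter_one_le_add (s : Finset ℕ) (g : ℕ → ℝ) :
    ∑ j ∈ s, g j = ∑ j ∈ s with 1 ≤ j, g j + if 0 ∈ s then g 0 else 0 := by
  rw [← Finset.sum_filter_add_sum_filter_not s (1 ≤ ·), Finset.sum_filter (¬1 ≤ ·)]
  simp only [not_le, Nat.lt_one_iff, Finset.sum_ite_eq']

section Moments

variable {Ω : Type*} [MeasureSpace Ω] {n : ℕ} {W η : ℕ → Ω → ℝ}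

lemma integral_preAvg_noise_sq (h : IsSimplifiedModel n W η) (lam : ℝ → ℝ) (τ : ℝ) (m i : ℕ) :
    ∫ ω, (preAvg lam n m (fun j ω => τ * η j ω) i ω) ^ 2
      = ((m : ℝ) / n) ^ 2 * τ ^ 2
        * ∑ j ∈ blockIdx n m i, lam ((m : ℝ) * j / n - ((i : ℝ) - 2)) ^ 2 := by
  have horth : ∀ j ∈ blockIdx n m i, ∀ l ∈ blockIdx n m i,
      ∫ ω, η j ω * η l ω = if j = l then 1 else 0 := fun j hj l hl =>
    h.2.2.2.2.1 j l (le_of_mem_blockIdx hj) (le_of_mem_blockIdx hl)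
  simp only [preAvg, mul_pow, ← mul_assoc _ τ]
  rw [integral_const_mul, integral_sum_mul_sq_of_orthonormal _ _
    (fun j hj => h.memLp_η (le_of_mem_blockIdx hj)) horth, Finset.mul_sum, Finset.mul_sum]
  exact Finset.sum_congr rfl fun j _ => by ring

lemma integral_biasCorr_obs (h : IsSimplifiedModel n W η) (lam : ℝ → ℝ) (σ τ : ℝ) (m i : ℕ) :
    ∫ ω, biasCorr lam n m (obs σ τ W η) i ω
      = ((m : ℝ) / n) ^ 2 / 2 * (σ ^ 2 / n + 2 * τ ^ 2)
        * ∑ j ∈ blockIdx n m i with 1 ≤ j, lam ((m : ℝ) * j / n - ((i : ℝ) - 2)) ^ 2 := by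
  have hint : ∀ j ∈ (blockIdx n m i).filter (1 ≤ ·), Integrable (fun ω =>
      lam ((m : ℝ) * j / n - ((i : ℝ) - 2)) ^ 2 * (obs σ τ W η j ω - obs σ τ W η (j - 1) ω) ^ 2) :=
    fun j hj => have hjn := le_of_mem_blockIdx (Finset.mem_filter.mp hj).1
      ((h.memLp_obs σ τ hjn).sub
        (h.memLp_obs σ τ (j.sub_le 1 |>.trans hjn))).integrable_sq.const_mul _
  simp only [biasCorr]
  rw [integral_const_mul, integral_finsetSum _ hint, Finset.mul_sum, Finset.mul_sum]
  refine Finset.sum_congr rfl fun j hj => ?_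
  obtain ⟨hjB, hj1⟩ := Finset.mem_filter.mp hj
  rw [integral_const_mul, h.integral_obs_sub_sq σ τ hj1 (le_of_mem_blockIdx hjB)]
  ring

end Moments

lemma pos_of_mOf_ne_zero {c : ℝ} {n : ℕ} (hm : mOf c n ≠ 0) : 0 < n :=
  (Nat.pos_of_ne_zero hm).trans_le (Nat.div_le_self _ _)

lemma mOf_le_two_mul_sqrt {c : ℝ} (hc : 0 < c) {n : ℕ} (hm : mOf c n ≠ 0) :
    (mOf c n : ℝ) ≤ 2 * c * √n := by
  set k := ⌊√n / c⌋₊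
  have hk : k ≠ 0 := fun hk => hm (by simp [mOf, k, hk])
  have hn : (0 : ℝ) < √n := Real.sqrt_pos.mpr (by exact_mod_cast pos_of_mOf_ne_zero hm)
  have hmk : (mOf c n : ℝ) * k ≤ √n * √n := by
    rw [Real.mul_self_sqrt n.cast_nonneg]; exact_mod_cast Nat.div_mul_le_self n k
  have hsqrt : √n ≤ 2 * c * k := by
    have hfloor := Nat.sub_one_lt_floor (√n / c)
    have hk1 : (1 : ℝ) ≤ k := by exact_mod_cast Nat.one_le_iff_ne_zero.mpr hk
    rw [sub_lt_iff_lt_add, div_lt_iff₀ hc] at hfloor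
    nlinarith
  nlinarith

lemma sq_mOf_div_le {c : ℝ} (hc : 0 < c) {n : ℕ} (hm : mOf c n ≠ 0) :
    ((mOf c n : ℝ) / n) ^ 2 ≤ 4 * c ^ 2 / n := by
  have hn : (0 : ℝ) < n := by exact_mod_cast pos_of_mOf_ne_zero hm
  have h := pow_le_pow_left₀ (mOf c n).cast_nonneg (mOf_le_two_mul_sqrt hc hm) 2
  rw [mul_pow, Real.sq_sqrt n.cast_nonneg] at h
  rw [div_pow, div_le_div_iff₀ (by positivity) hn]
  nlinarith

lemma abs_noise_sub_bias_le {n q σ τ S R M : ℝ} (hn : 1 ≤ n) (hq : 0 ≤ q) (hS : 0 ≤ S)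
    (hSM : S ≤ (n + 1) * M) (hR : 0 ≤ R) (hRM : R ≤ M) :
    |q * τ ^ 2 * (S + R) - q / 2 * (σ ^ 2 / n + 2 * τ ^ 2) * S| ≤ q * (σ ^ 2 + τ ^ 2) * M := by
  have hdiff : q * τ ^ 2 * (S + R) - q / 2 * (σ ^ 2 / n + 2 * τ ^ 2) * S
      = q * (τ ^ 2 * R - σ ^ 2 * (S / (2 * n))) := by
    field_simp; ring
  have hSn : S / (2 * n) ≤ M := by
    rw [div_le_iff₀ (by linarith)]; nlinarith
  rw [hdiff, abs_mul, abs_of_nonneg hq, mul_assoc]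
  gcongr
  rw [abs_le]
  constructor <;> nlinarith [sq_nonneg σ, sq_nonneg τ, div_nonneg hS (by linarith : (0:ℝ) ≤ 2 * n)]

theorem biasCorrection_matches_noise_second_moment_general (σ τ c : ℝ) (hc : 0 < c)
    (lam : ℝ → ℝ) (hlam : IsPreAverageFn lam)
    (Ω : ℕ → Type*) [∀ n, MeasureSpace (Ω n)]
    (W η : (n : ℕ) → ℕ → Ω n → ℝ)
    (hmodel : ∀ n, IsSimplifiedModel n (W n) (η n)) :
    ∃ C > 0, ∃ N : ℕ, ∀ n ≥ N, ∀ i : ℕ, 2 ≤ i → i ≤ mOf c n →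
      |(∫ ω, (preAvg lam n (mOf c n) (fun j ω => τ * η n j ω) i ω) ^ 2)
          - ∫ ω, biasCorr lam n (mOf c n) (obs σ τ (W n) (η n)) i ω| ≤ C / n := by
  obtain ⟨M, hM⟩ := isBounded_iff_forall_norm_le.mp hlam.isBounded_image_Icc
  refine ⟨4 * c ^ 2 * (σ ^ 2 + τ ^ 2) * M ^ 2 + 1, by positivity, 0, fun n _ i hi him => ?_⟩
  set m := mOf c n
  have hm : m ≠ 0 := by omega
  have hn : 0 < n := pos_of_mOf_ne_zero hm
  rw [integral_preAvg_noise_sq (hmodel n), integral_biasCorr_obs (hmodel n),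
    sum_eq_sum_filter_one_le_add]
  have hlamM : ∀ j ∈ blockIdx n m i, lam ((m : ℝ) * j / n - ((i : ℝ) - 2)) ^ 2 ≤ M ^ 2 :=
    fun j hj => sq_le_sq.mpr ((hM _ ⟨_, mem_Icc_of_mem_blockIdx hn (Nat.pos_of_ne_zero hm) hj,
      rfl⟩).trans (le_abs_self M))
  calc _ ≤ ((m : ℝ) / n) ^ 2 * (σ ^ 2 + τ ^ 2) * M ^ 2 := by
        refine abs_noise_sub_bias_le (by exact_mod_cast hn) (sq_nonneg _)
          (Finset.sum_nonneg fun _ _ => sq_nonneg _)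
          (sum_filter_one_le_blockIdx_le (sq_nonneg M) hlamM) (by split_ifs <;> positivity) ?_
        split_ifs with h0
        exacts [hlamM 0 h0, sq_nonneg M]
    _ ≤ 4 * c ^ 2 / n * (σ ^ 2 + τ ^ 2) * M ^ 2 := by gcongr; exact sq_mOf_div_le hc hm
    _ ≤ _ := by
        rw [div_mul_eq_mul_div, div_mul_eq_mul_div]
        gcongr
        linarith

theorem biasCorrection_matches_noise_second_moment (σ τ c : ℝ) (hσ : 0 < σ) (hτ : 0 < τ) (hc : 0 < c)
    (lam : ℝ → ℝ) (hlam : IsPreAverageFn lam)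
    (Ω : ℕ → Type*) [∀ n, MeasureSpace (Ω n)] [∀ n, IsProbabilityMeasure (ℙ : Measure (Ω n))]
    (W η : (n : ℕ) → ℕ → Ω n → ℝ)
    (hmodel : ∀ n, IsSimplifiedModel n (W n) (η n)) :
    ∃ C > 0, ∃ N : ℕ, ∀ n ≥ N, ∀ i : ℕ, 2 ≤ i → i ≤ mOf c n →
      |(∫ ω, (preAvg lam n (mOf c n) (fun j ω => τ * η n j ω) i ω) ^ 2)
          - ∫ ω, biasCorr lam n (mOf c n) (obs σ τ (W n) (η n)) i ω| ≤ C / n :=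
  biasCorrection_matches_noise_second_moment_general σ τ c hc lam hlam Ω W η hmodel
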